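/- Let c : (ℕ → Bool) → [0,1] be the map c(x) = Σ_{n∈ℕ} x(n)/2^{n+1} (reading true as 1 and false as 0). A subset X of the unit interval [0,1] has sharp measure zero if, and only if, c⁻¹(X) has sharp measure zero as a subset of the Cantor space. -/

import Mathlib

/-!
The map `c` is `1`-Lipschitz (a common prefix of length `k` pins `c` down to an interval of
length `2⁻ᵏ`) and onto (its range is compact, and dense by repeated halving), and uniformly
continuous maps preserve sharp measure zero, so `X = c '' (c ⁻¹' X)` inherits it from `c ⁻¹' X`.
Conversely, if `diam U ≤ 2⁻ᵏ` then `c ⁻¹' U` lies in five cylinders of length `k`, each of diameter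
`2⁻ᵏ`; a sharp cover of `X` thus pulls back to one of `c ⁻¹' X`, each set splitting into five.
-/

-- The Cantor space `ℕ → Bool` carries the metric `dist x y = (1/2)^n`, where `n` is the
-- least index at which `x` and `y` differ; the unit interval carries the metric from `ℝ`.
attribute [local instance] PiNat.metricSpace

/-- A subset `X` of a metric space `Y` has sharp measure zero if for every sequence
`(ε n)` of positive reals there are a sequence `(U n)` of subsets of `Y` with
`diam (U n) ≤ ε n` for every `n` whose union covers `X`, together with a map
`π : ℕ → ℕ` with finite fibers such that every `x ∈ X` belongs to
`⋃ {U k : π k = m}` for all but finitely many `m`. -/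
def HasSharpMeasureZero {Y : Type*} [MetricSpace Y] (X : Set Y) : Prop :=
  ∀ ε : ℕ → ℝ, (∀ n, 0 < ε n) →
    ∃ (U : ℕ → Set Y) (π : ℕ → ℕ),
      (∀ n, EMetric.diam (U n) ≤ ENNReal.ofReal (ε n)) ∧ X ⊆ ⋃ n, U n ∧
      (∀ m, (π ⁻¹' {m}).Finite) ∧
      ∀ x ∈ X, ∀ᶠ m in Filter.atTop, x ∈ ⋃ k ∈ π ⁻¹' {m}, U k

lemma cantorSum_mem_Icc (x : ℕ → Bool) :
    (∑' n : ℕ, (if x n then (1 : ℝ) else 0) / 2 ^ (n + 1)) ∈ Set.Icc (0 : ℝ) 1 := by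
  have key : ∀ n : ℕ, (1 : ℝ) / 2 / 2 ^ n = 1 / 2 ^ (n + 1) := by
    intro n; rw [pow_succ]; ring
  have hle : ∀ n : ℕ, (if x n then (1 : ℝ) else 0) / 2 ^ (n + 1) ≤ 1 / 2 / 2 ^ n := by
    intro n
    rw [key n]
    by_cases h : x n <;> simp [h]
  have hnn : ∀ n : ℕ, 0 ≤ (if x n then (1 : ℝ) else 0) / 2 ^ (n + 1) := by
    intro n
    by_cases h : x n <;> simp [h]
  constructor
  · exact tsum_nonneg hnn
  · calc (∑' n : ℕ, (if x n then (1 : ℝ) else 0) / 2 ^ (n + 1))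
        ≤ ∑' n : ℕ, (1 : ℝ) / 2 / 2 ^ n := by
          refine Summable.tsum_le_tsum hle ?_ ?_
          · exact Summable.of_nonneg_of_le hnn hle (summable_geometric_two' 1)
          · exact summable_geometric_two' 1
      _ = 1 := tsum_geometric_two' 1

/-- The canonical map `c : (ℕ → Bool) → [0,1]`, `c x = ∑ x n / 2 ^ (n + 1)`. -/
noncomputable def cantorMap (x : ℕ → Bool) : Set.Icc (0 : ℝ) 1 :=
  ⟨∑' n : ℕ, (if x n then (1 : ℝ) else 0) / 2 ^ (n + 1), cantorSum_mem_Icc x⟩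

lemma UniformContinuous.exists_ediam_image_le {Y Z : Type*} [PseudoMetricSpace Y]
    [PseudoMetricSpace Z] {f : Y → Z} (hf : UniformContinuous f) {ε : ℝ} (hε : 0 < ε) :
    ∃ δ > 0, ∀ U : Set Y, Metric.ediam U ≤ ENNReal.ofReal δ →
      Metric.ediam (f '' U) ≤ ENNReal.ofReal ε := by
  obtain ⟨δ, hδ, hfδ⟩ := Metric.uniformContinuous_iff.1 hf ε hε
  refine ⟨δ / 2, by positivity, fun U hU => Metric.ediam_image_le_iff.2 fun x hx y hy => ?_⟩
  have hxy := Metric.edist_le_of_ediam_le hx hy hU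
  rw [edist_dist, ENNReal.ofReal_le_ofReal_iff (by positivity)] at hxy ⊢
  exact (hfδ (by linarith)).le

namespace HasSharpMeasureZero

variable {Y Z : Type*} [MetricSpace Y] [MetricSpace Z]

theorem image {S : Set Y} (hS : HasSharpMeasureZero S) {f : Y → Z}
    (hf : UniformContinuous f) : HasSharpMeasureZero (f '' S) := by
  intro ε hε
  choose δ hδ hδU using fun n => hf.exists_ediam_image_le (hε n)
  obtain ⟨U, π, hdiam, hcov, hfib, hev⟩ := hS δ hδ
  refine ⟨fun n => f '' U n, π, fun n => hδU n _ (hdiam n), ?_, hfib, ?_⟩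
  · rw [← Set.image_iUnion]
    exact Set.image_mono hcov
  · rintro _ ⟨x, hx, rfl⟩
    filter_upwards [hev x hx] with m hm
    simpa only [Set.image_iUnion₂] using Set.mem_image_of_mem f hm

/-- Each member of the cover of `S` pulls back to a block of `N` consecutive members. -/
theorem preimage {S : Set Z} (hS : HasSharpMeasureZero S) {f : Y → Z} {N : ℕ} [NeZero N]
    (hf : ∀ δ > 0, ∃ η > 0, ∀ U : Set Z, Metric.ediam U ≤ ENNReal.ofReal η →
      ∃ W : Fin N → Set Y, (∀ i, Metric.ediam (W i) ≤ ENNReal.ofReal δ) ∧ f ⁻¹' U ⊆ ⋃ i, W i) :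
    HasSharpMeasureZero (f ⁻¹' S) := by
  intro ε hε
  let e := Nat.divModEquiv N
  let δ n := Finset.univ.inf' Finset.univ_nonempty fun i => ε (e.symm (n, i))
  have hδ n : 0 < δ n := (Finset.lt_inf'_iff _).2 fun i _ => hε _
  choose η hη hηW using fun n => hf (δ n) (hδ n)
  obtain ⟨U, π, hdiam, hcov, hfib, hev⟩ := hS η hη
  choose W hWdiam hWcov using fun n => hηW n (U n) (hdiam n)
  have hmem {x n} (hx : f x ∈ U n) : ∃ k, (e k).1 = n ∧ x ∈ W (e k).1 (e k).2 := by
    obtain ⟨i, hi⟩ := Set.mem_iUnion.1 (hWcov n hx)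
    exact ⟨e.symm (n, i), by simpa only [e.apply_symm_apply, true_and] using hi⟩
  refine ⟨fun k => W (e k).1 (e k).2, fun k => π (e k).1, fun k => ?_, fun x hx => ?_,
    fun m => ?_, fun x hx => ?_⟩
  · refine (hWdiam _ _).trans (ENNReal.ofReal_le_ofReal ?_)
    calc δ (e k).1 ≤ ε (e.symm ((e k).1, (e k).2)) := Finset.inf'_le _ (Finset.mem_univ _)
      _ = ε k := by rw [Prod.mk.eta, e.symm_apply_apply]
  · obtain ⟨n, hn⟩ := Set.mem_iUnion.1 (hcov hx)
    obtain ⟨k, -, hk⟩ := hmem hn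
    exact Set.mem_iUnion.2 ⟨k, hk⟩
  · exact (((hfib m).prod Set.finite_univ).preimage e.injective.injOn).subset
      fun k hk => ⟨hk, trivial⟩
  · filter_upwards [hev (f x) hx] with m hm
    obtain ⟨n, hn, hxn⟩ := Set.mem_iUnion₂.1 hm
    obtain ⟨k, rfl, hk⟩ := hmem hxn
    exact Set.mem_iUnion₂.2 ⟨k, hn, hk⟩

end HasSharpMeasureZero

lemma summable_cantorSum (x : ℕ → Bool) :
    Summable fun n : ℕ => (if x n then (1 : ℝ) else 0) / 2 ^ (n + 1) := by
  refine Summable.of_nonneg_of_le (fun n => by positivity) (fun n => ?_)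
    (summable_geometric_two' 1)
  rw [pow_succ, div_div, mul_comm]
  gcongr
  split_ifs <;> norm_num

lemma cantorMap_coe_eq_head_add_tail (x : ℕ → Bool) :
    (cantorMap x : ℝ) = ((x 0).toNat + cantorMap (fun n => x (n + 1))) / 2 := by
  simp only [cantorMap]
  rw [(summable_cantorSum x).tsum_eq_zero_add, add_div, ← tsum_div_const]
  congr 1
  · cases x 0 <;> norm_num
  · refine tsum_congr fun n => ?_
    rw [pow_succ _ (n + 1), div_div]

def cantorPrefix (x : ℕ → Bool) : ℕ → ℕ
  | 0 => 0
  | k + 1 => 2 * cantorPrefix x k + (x k).toNat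

lemma cantorMap_coe_eq_prefix_add_tail (x : ℕ → Bool) (k : ℕ) :
    (cantorMap x : ℝ) = (cantorPrefix x k + cantorMap (fun n => x (n + k))) / 2 ^ k := by
  induction k with
  | zero => simp [cantorPrefix]
  | succ k ih =>
    rw [ih, cantorMap_coe_eq_head_add_tail (fun n => x (n + k))]
    simp only [cantorPrefix, Nat.add_right_comm _ 1 k, ← add_assoc, zero_add]
    push_cast
    field_simp
    ring

lemma two_pow_mul_cantorMap_mem_Icc (x : ℕ → Bool) (k : ℕ) :
    2 ^ k * (cantorMap x : ℝ) ∈ Set.Icc (cantorPrefix x k : ℝ) (cantorPrefix x k + 1) := by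
  have htail := (cantorMap fun n => x (n + k)).2
  rw [cantorMap_coe_eq_prefix_add_tail x k, mul_div_cancel₀ _ (by positivity)]
  constructor <;> linarith [htail.1, htail.2]

lemma cantorPrefix_eq_iff {x y : ℕ → Bool} {k : ℕ} :
    cantorPrefix x k = cantorPrefix y k ↔ ∀ j < k, x j = y j := by
  induction k with
  | zero => simp [cantorPrefix]
  | succ k ih =>
    simp only [cantorPrefix, Nat.forall_lt_succ_right, ← ih]
    cases x k <;> cases y k <;> simp <;> omega

lemma dist_le_of_cantorPrefix_eq {x y : ℕ → Bool} {k : ℕ}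
    (h : cantorPrefix x k = cantorPrefix y k) : dist x y ≤ (1 / 2) ^ k :=
  PiNat.mem_cylinder_iff_dist_le.1 (PiNat.mem_cylinder_iff.2 (cantorPrefix_eq_iff.1 h))

lemma lipschitzWith_one_cantorMap : LipschitzWith 1 cantorMap := by
  refine LipschitzWith.of_dist_le_mul fun x y => ?_
  rcases eq_or_ne x y with rfl | hxy
  · simp
  set k := PiNat.firstDiff x y
  have hk : cantorPrefix x k = cantorPrefix y k :=
    cantorPrefix_eq_iff.2 fun j hj => PiNat.apply_eq_of_lt_firstDiff hj
  obtain ⟨hx₁, hx₂⟩ := two_pow_mul_cantorMap_mem_Icc x k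
  obtain ⟨hy₁, hy₂⟩ := two_pow_mul_cantorMap_mem_Icc y k
  rw [hk] at hx₁ hx₂
  have hpos : (0 : ℝ) < 2 ^ k := by positivity
  rw [NNReal.coe_one, one_mul, PiNat.dist_eq_of_ne hxy, Subtype.dist_eq, Real.dist_eq, div_pow,
    one_pow, le_div_iff₀' hpos, ← abs_of_pos hpos, ← abs_mul, abs_le, mul_sub]
  constructor <;> linarith

lemma exists_abs_cantorMap_sub_le (k : ℕ) :
    ∀ r ∈ Set.Icc (0 : ℝ) 1, ∃ x, |(cantorMap x : ℝ) - r| ≤ (1 / 2) ^ k := by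
  induction k with
  | zero =>
    intro r hr
    have h := (cantorMap fun _ => false).2
    exact ⟨fun _ => false, abs_le.2 ⟨by linarith [hr.2, h.1], by linarith [hr.1, h.2]⟩⟩
  | succ k ih =>
    intro r hr
    -- The first bit picks the half of `[0,1]` containing `r`.
    obtain ⟨b, hb⟩ : ∃ b : Bool, 2 * r - b.toNat ∈ Set.Icc (0 : ℝ) 1 := by
      rcases le_total r (1 / 2) with h | h
      · exact ⟨false, by norm_num; constructor <;> linarith [hr.1]⟩
      · exact ⟨true, by norm_num; constructor <;> linarith [hr.2]⟩
    obtain ⟨y, hy⟩ := ih _ hb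
    refine ⟨fun | 0 => b | n + 1 => y n, ?_⟩
    rw [cantorMap_coe_eq_head_add_tail, pow_succ]
    have hhalf : ((b.toNat : ℝ) + cantorMap y) / 2 - r =
        ((cantorMap y : ℝ) - (2 * r - b.toNat)) / 2 := by ring
    rw [hhalf, abs_div, abs_two]
    linarith

theorem cantorMap_surjective : Function.Surjective cantorMap := by
  have hclosed : IsClosed (Set.range cantorMap) :=
    (isCompact_range lipschitzWith_one_cantorMap.continuous).isClosed
  refine fun r => hclosed.closure_subset (Metric.mem_closure_iff.2 fun ε hε => ?_)
  obtain ⟨k, hk⟩ := exists_pow_lt_of_lt_one hε one_half_lt_one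
  obtain ⟨x, hx⟩ := exists_abs_cantorMap_sub_le k r r.2
  refine ⟨cantorMap x, ⟨x, rfl⟩, ?_⟩
  rw [Subtype.dist_eq, Real.dist_eq, abs_sub_comm]
  exact hx.trans_lt hk

lemma cantorMap_preimage_subset_iUnion {k : ℕ} {U : Set (Set.Icc (0 : ℝ) 1)}
    (hU : Metric.ediam U ≤ ENNReal.ofReal ((1 / 2) ^ k)) :
    ∃ W : Fin 5 → Set (ℕ → Bool), (∀ i, Metric.ediam (W i) ≤ ENNReal.ofReal ((1 / 2) ^ k)) ∧
      cantorMap ⁻¹' U ⊆ ⋃ i, W i := by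
  rcases (cantorMap ⁻¹' U).eq_empty_or_nonempty with h | ⟨a, ha⟩
  · exact ⟨fun _ => ∅, by simp, by simp [h]⟩
  -- If `c x` is within `2⁻ᵏ` of `c a`, the `k`-bit prefixes of `x` and `a` differ by at most 2.
  refine ⟨fun i => {x | cantorPrefix x k + 2 = cantorPrefix a k + i}, fun i => ?_, fun x hx => ?_⟩
  · refine Metric.ediam_le fun x hx y hy => ?_
    rw [edist_dist]
    refine ENNReal.ofReal_le_ofReal (dist_le_of_cantorPrefix_eq ?_)
    simp only [Set.mem_ofPred_eq] at hx hy
    omega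
  have hpos : (0 : ℝ) < 2 ^ k := by positivity
  have hdist := Metric.edist_le_of_ediam_le (s := U) hx ha hU
  rw [edist_dist, ENNReal.ofReal_le_ofReal_iff (by positivity), Subtype.dist_eq, Real.dist_eq,
    one_div_pow, le_div_iff₀' hpos, ← abs_of_pos hpos, ← abs_mul, abs_le, mul_sub] at hdist
  obtain ⟨hx₁, hx₂⟩ := two_pow_mul_cantorMap_mem_Icc x k
  obtain ⟨ha₁, ha₂⟩ := two_pow_mul_cantorMap_mem_Icc a k
  have hxa : cantorPrefix x k ≤ cantorPrefix a k + 2 := by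
    exact_mod_cast (show (cantorPrefix x k : ℝ) ≤ cantorPrefix a k + 2 by linarith)
  have hax : cantorPrefix a k ≤ cantorPrefix x k + 2 := by
    exact_mod_cast (show (cantorPrefix a k : ℝ) ≤ cantorPrefix x k + 2 by linarith)
  simp only [Set.mem_iUnion, Set.mem_ofPred_eq]
  exact ⟨⟨cantorPrefix x k + 2 - cantorPrefix a k, by omega⟩, by simp only; omega⟩

/-- A subset `X` of the unit interval has sharp measure zero iff `c ⁻¹' X` has
sharp measure zero as a subset of the Cantor space. -/
theorem hasSharpMeasureZero_iff_preimage_cantorMap (X : Set (Set.Icc (0 : ℝ) 1)) :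
    HasSharpMeasureZero X ↔ HasSharpMeasureZero (cantorMap ⁻¹' X) := by
  refine ⟨fun hX => hX.preimage (N := 5) fun δ hδ => ?_, fun hX => ?_⟩
  · obtain ⟨k, hk⟩ := exists_pow_lt_of_lt_one hδ one_half_lt_one
    refine ⟨(1 / 2) ^ k, by positivity, fun U hU => ?_⟩
    obtain ⟨W, hW, hcov⟩ := cantorMap_preimage_subset_iUnion hU
    exact ⟨W, fun i => (hW i).trans (ENNReal.ofReal_le_ofReal hk.le), hcov⟩
  · simpa only [Set.image_preimage_eq X cantorMap_surjective] using
      hX.image lipschitzWith_one_cantorMap.uniformContinuous
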